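/- arXiv:2403.15621 — 2 statements merged into one kernel-verified Lean document; each statement's English description precedes it below -/
import Mathlib

section
/- Suppose λ > 0, c_a - κ - λ·exp(-1) < θ < c_a - κ, and let n* and N be real numbers with 0 ≤ n* < N. Define the foraging probability p := (-ln((c_a - κ - θ)/λ) - n* - 1)/(N - n*) and the expected number of foraging robots E := N·p + n*·(1 - p). Then E = -ln((c_a - κ - θ)/λ) - 1 and π(E, θ) = 0; i.e., the mixed strategy in which each of the N - n* idle robots independently forages with probability p yields an expected number of foragers that satisfies the mixed-strategy Nash equilibrium condition. -/
/-- The marginal utility of foraging: `π(n, θ) = -c_a + κ + λ·exp(-(n+1)) + θ`. -/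
noncomputable def margUtil (c_a κ lam n θ : ℝ) : ℝ := -c_a + κ + lam * Real.exp (-(n + 1)) + θ

lemma mul_div_add_mul_one_sub_div {K : Type*} [Field K] {a b : K} (hab : b ≠ a) (y : K) :
    a * (y / (a - b)) + b * (1 - y / (a - b)) = b + y := by
  have : a - b ≠ 0 := sub_ne_zero.mpr hab.symm
  field_simp
  ring

lemma margUtil_neg_log_sub_one {c_a κ lam θ : ℝ} (hlam : 0 < lam) (hθ : θ < c_a - κ) :
    margUtil c_a κ lam (-Real.log ((c_a - κ - θ) / lam) - 1) θ = 0 := by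
  have hpos : 0 < (c_a - κ - θ) / lam := div_pos (by linarith) hlam
  rw [margUtil, sub_add_cancel, neg_neg, Real.exp_log hpos, mul_div_cancel₀ _ hlam.ne']
  ring

theorem stmt11_general (c_a κ lam θ nstar N : ℝ) (hlam : 0 < lam)
    (hθ₂ : θ < c_a - κ) (hnN : nstar < N) :
    let p := (-Real.log ((c_a - κ - θ) / lam) - nstar - 1) / (N - nstar)
    let E := N * p + nstar * (1 - p)
    E = -Real.log ((c_a - κ - θ) / lam) - 1 ∧ margUtil c_a κ lam E θ = 0 := by
  intro p E
  have hE : E = -Real.log ((c_a - κ - θ) / lam) - 1 := by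
    change N * p + nstar * (1 - p) = _
    rw [mul_div_add_mul_one_sub_div hnN.ne]
    ring
  exact ⟨hE, hE ▸ margUtil_neg_log_sub_one hlam hθ₂⟩

/-- Suppose `λ > 0`, `c_a - κ - λ·exp(-1) < θ < c_a - κ`, and `0 ≤ n* < N`. With the
foraging probability `p = (-ln((c_a - κ - θ)/λ) - n* - 1)/(N - n*)`, the expected
number of foragers `E = N·p + n*·(1 - p)` equals `-ln((c_a - κ - θ)/λ) - 1` and
satisfies the mixed-strategy Nash equilibrium condition `π(E, θ) = 0`. -/
theorem stmt11 (c_a κ lam θ nstar N : ℝ) (hlam : 0 < lam)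
    (hθ₁ : c_a - κ - lam * Real.exp (-1) < θ) (hθ₂ : θ < c_a - κ)
    (hn : 0 ≤ nstar) (hnN : nstar < N) :
    let p := (-Real.log ((c_a - κ - θ) / lam) - nstar - 1) / (N - nstar)
    let E := N * p + nstar * (1 - p)
    E = -Real.log ((c_a - κ - θ) / lam) - 1 ∧ margUtil c_a κ lam E θ = 0 :=
  stmt11_general c_a κ lam θ nstar N hlam hθ₂ hnN
end

section
/- Suppose c_a - κ = 1 and λ = e·(c_a - κ) = e (i.e., Assumptions 1 and 2 hold with equality). Then for every θ with 0 < θ < 1 there exists a unique real n* ≥ 0 with π(n*, θ) = 0; for every θ ≥ 1, π(n, θ) > 0 for all real n ≥ 0; and for every θ ≤ 0, π(n, θ) ≤ 0 for all real n ≥ 0. In other words, the mixed-strategy Nash equilibrium exists exactly for signal values θ in the interval (0, 1). -/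
open Real

theorem margUtil_exp_one (c_a κ n θ : ℝ) :
    margUtil c_a κ (exp 1) n θ = exp (-n) - (c_a - κ) + θ := by
  rw [margUtil, ← exp_add]
  ring_nf

theorem existsUnique_nonneg_exp_neg_eq {c : ℝ} (hc : 0 < c) (hc1 : c ≤ 1) :
    ∃! n : ℝ, 0 ≤ n ∧ exp (-n) = c :=
  ⟨-log c, ⟨neg_nonneg.mpr (log_nonpos hc.le hc1), by rw [neg_neg, exp_log hc]⟩,
    fun m ⟨_, hm⟩ => by rw [← hm, log_exp, neg_neg]⟩

/-- Suppose `c_a - κ = 1` and `λ = e` (Assumptions 1 and 2 with equality). Then a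
mixed-strategy Nash equilibrium (a unique `n* ≥ 0` with `π(n*, θ) = 0`) exists for
every `θ ∈ (0, 1)`; for `θ ≥ 1`, `π(n, θ) > 0` for all `n ≥ 0`; and for `θ ≤ 0`,
`π(n, θ) ≤ 0` for all `n ≥ 0`. -/
theorem stmt12 (c_a κ lam : ℝ) (h₁ : c_a - κ = 1) (h₂ : lam = Real.exp 1) :
    (∀ θ : ℝ, 0 < θ → θ < 1 → ∃! n : ℝ, 0 ≤ n ∧ margUtil c_a κ lam n θ = 0) ∧
    (∀ θ : ℝ, 1 ≤ θ → ∀ n : ℝ, 0 ≤ n → margUtil c_a κ lam n θ > 0) ∧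
    (∀ θ : ℝ, θ ≤ 0 → ∀ n : ℝ, 0 ≤ n → margUtil c_a κ lam n θ ≤ 0) := by
  have hπ : ∀ n θ, margUtil c_a κ lam n θ = exp (-n) - 1 + θ := fun n θ => by
    rw [h₂, margUtil_exp_one, h₁]
  refine ⟨fun θ hθ₀ hθ₁ => ?_, fun θ hθ n _ => ?_, fun θ hθ n hn => ?_⟩
  · obtain ⟨n, ⟨hn, hexp⟩, huniq⟩ :=
      existsUnique_nonneg_exp_neg_eq (c := 1 - θ) (by linarith) (by linarith)
    refine ⟨n, ⟨hn, by rw [hπ]; linarith⟩, fun m ⟨hm, hπm⟩ => huniq m ⟨hm, ?_⟩⟩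
    rw [hπ] at hπm
    linarith
  · rw [hπ]
    linarith [exp_pos (-n)]
  · rw [hπ]
    linarith [exp_le_one_iff.mpr (neg_nonpos.mpr hn)]
end
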